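/- For all α > 1, σ > 0, a > 0 and reals θ, c, with Δ(u) = Φ((a−u)/σ) − Φ((−a−u)/σ), one has Δ(θ+c)^{α−1} · Δ(θ+(1−α)c) ≤ Δ(θ)^α. Equivalently, the Rényi divergence of order α between the truncated Gaussians N^T(θ, σ², [−a,a]) and N^T(θ+c, σ², [−a,a]), namely α·c²/(2σ²) + log(Δ(θ+c)/Δ(θ)) + (1/(α−1))·log(Δ(θ+(1−α)c)/Δ(θ)), is at most α·c²/(2σ²), the Rényi divergence of order α between the Gaussians N(θ,σ²) and N(θ+c,σ²). -/

import Mathlib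

/-!
Since `θ = ((α - 1)(θ + c) + (θ + (1 - α)c)) / α`, the inequality is weighted AM–GM for the
log-concave function `u ↦ Δ a σ u`. By `φ' t = -t φ t`, log-concavity of
`w ↦ Φ (r + w) - Φ (l + w)` amounts to `(l φ l - r φ r) D ≤ (φ l - φ r)²` with `D = Φ r - Φ l`.
As `φ l - φ r = ∫ₗʳ t φ t`, the mean `(φ l - φ r) / D` of the normal law truncated to `[l, r]`
lies in `[l, r]`, and the difference of the two sides is
`(l D - (φ l - φ r)) φ l - (r D - (φ l - φ r)) φ r ≤ 0`.
-/

open MeasureTheory Real Filter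

/-- Standard Gaussian density. -/
noncomputable def phi (x : ℝ) : ℝ := (Real.sqrt (2 * Real.pi))⁻¹ * Real.exp (-(x ^ 2) / 2)

/-- Standard Gaussian cumulative distribution function. -/
noncomputable def Phi (x : ℝ) : ℝ := ∫ t in Set.Iic x, phi t

/-- Mass of the Gaussian `N(u, σ²)` on `[−a, a]`. -/
noncomputable def Δ (a σ u : ℝ) : ℝ := Phi ((a - u) / σ) - Phi ((-a - u) / σ)

open Set

lemma phi_pos (x : ℝ) : 0 < phi x := by
  unfold phi
  have : 0 < √(2 * π) := by positivity
  positivity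

@[fun_prop]
lemma continuous_phi : Continuous phi := by
  unfold phi
  fun_prop

lemma integrable_phi : Integrable phi := by
  refine ((integrable_exp_neg_mul_sq (b := 1 / 2) (by norm_num)).const_mul
    (√(2 * π))⁻¹).congr (.of_forall fun x => ?_)
  simp only [phi]
  ring_nf

lemma hasDerivAt_phi (x : ℝ) : HasDerivAt phi (-x * phi x) x := by
  have h : HasDerivAt (fun t : ℝ => -(t ^ 2) / 2) (-x) x :=
    ((hasDerivAt_pow 2 x).neg.div_const 2).congr_deriv (by push_cast; ring)
  exact (h.exp.const_mul (√(2 * π))⁻¹).congr_deriv (by rw [phi]; ring)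

lemma Phi_sub_Phi (l r : ℝ) : Phi r - Phi l = ∫ t in l..r, phi t :=
  intervalIntegral.integral_Iic_sub_Iic integrable_phi.integrableOn integrable_phi.integrableOn

lemma Phi_sub_Phi_pos {l r : ℝ} (h : l < r) : 0 < Phi r - Phi l := by
  rw [Phi_sub_Phi]
  exact intervalIntegral.intervalIntegral_pos_of_pos_on
    (continuous_phi.intervalIntegrable l r) (fun x _ => phi_pos x) h

lemma hasDerivAt_Phi (x : ℝ) : HasDerivAt Phi (phi x) x := by
  have hPhi : Phi = fun u => Phi 0 + ∫ t in (0 : ℝ)..u, phi t := by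
    funext u
    rw [← Phi_sub_Phi, add_sub_cancel]
  rw [hPhi]
  exact (intervalIntegral.integral_hasDerivAt_right integrable_phi.intervalIntegrable
    continuous_phi.stronglyMeasurable.stronglyMeasurableAtFilter
    continuous_phi.continuousAt).const_add _

lemma integral_mul_phi (l r : ℝ) : ∫ t in l..r, t * phi t = phi l - phi r := by
  rw [intervalIntegral.integral_eq_sub_of_hasDerivAt (f := fun t => -phi t)
    (fun x _ => (hasDerivAt_phi x).neg.congr_deriv (by ring))
    ((by fun_prop : Continuous fun t => t * phi t).intervalIntegrable l r)]
  ring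

lemma mul_Phi_sub_Phi_le_phi_sub_phi {l r : ℝ} (h : l ≤ r) :
    l * (Phi r - Phi l) ≤ phi l - phi r := by
  rw [Phi_sub_Phi, ← integral_mul_phi, ← intervalIntegral.integral_const_mul]
  exact intervalIntegral.integral_mono_on h
    ((by fun_prop : Continuous _).intervalIntegrable l r)
    ((by fun_prop : Continuous _).intervalIntegrable l r)
    fun t ht => mul_le_mul_of_nonneg_right ht.1 (phi_pos t).le

lemma phi_sub_phi_le_mul_Phi_sub_Phi {l r : ℝ} (h : l ≤ r) :
    phi l - phi r ≤ r * (Phi r - Phi l) := by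
  rw [Phi_sub_Phi, ← integral_mul_phi, ← intervalIntegral.integral_const_mul]
  exact intervalIntegral.integral_mono_on h
    ((by fun_prop : Continuous _).intervalIntegrable l r)
    ((by fun_prop : Continuous _).intervalIntegrable l r)
    fun t ht => mul_le_mul_of_nonneg_right ht.2 (phi_pos t).le

lemma mul_phi_sub_mul_phi_mul_le_sq {l r : ℝ} (h : l ≤ r) :
    (l * phi l - r * phi r) * (Phi r - Phi l) ≤ (phi l - phi r) ^ 2 := by
  linear_combination mul_le_mul_of_nonneg_right (mul_Phi_sub_Phi_le_phi_sub_phi h) (phi_pos l).le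
    + mul_le_mul_of_nonneg_right (phi_sub_phi_le_mul_Phi_sub_Phi h) (phi_pos r).le

lemma concaveOn_log_Phi_add_sub_Phi_add {l r : ℝ} (h : l < r) :
    ConcaveOn ℝ univ fun w => log (Phi (r + w) - Phi (l + w)) := by
  set D : ℝ → ℝ := fun w => Phi (r + w) - Phi (l + w)
  set D' : ℝ → ℝ := fun w => phi (r + w) - phi (l + w)
  set D'' : ℝ → ℝ := fun w => (l + w) * phi (l + w) - (r + w) * phi (r + w)
  have hD_pos (w : ℝ) : 0 < D w := Phi_sub_Phi_pos (by linarith)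
  have hD (w : ℝ) : HasDerivAt D (D' w) w :=
    ((hasDerivAt_Phi _).comp_const_add r w).sub ((hasDerivAt_Phi _).comp_const_add l w)
  have hD' (w : ℝ) : HasDerivAt D' (D'' w) w :=
    (((hasDerivAt_phi _).comp_const_add r w).sub
      ((hasDerivAt_phi _).comp_const_add l w)).congr_deriv (by ring)
  have hlogD (w : ℝ) : HasDerivAt (fun w => log (D w)) (D' w / D w) w :=
    (hD w).log (hD_pos w).ne'
  refine concaveOn_of_hasDerivWithinAt2_nonpos convex_univ
    (fun w _ => (hlogD w).continuousAt.continuousWithinAt)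
    (fun w _ => (hlogD w).hasDerivWithinAt)
    (fun w _ => ((hD' w).div (hD w) (hD_pos w).ne').hasDerivWithinAt) fun w _ => ?_
  have hkey := mul_phi_sub_mul_phi_mul_le_sq (by linarith : l + w ≤ r + w)
  exact div_nonpos_of_nonpos_of_nonneg (by linear_combination hkey) (sq_nonneg _)

lemma Δ_pos {a σ : ℝ} (hσ : 0 < σ) (ha : 0 < a) (u : ℝ) : 0 < Δ a σ u :=
  Phi_sub_Phi_pos (div_lt_div_of_pos_right (by linarith) hσ)

lemma concaveOn_log_Δ {a σ : ℝ} (hσ : 0 < σ) (ha : 0 < a) :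
    ConcaveOn ℝ univ fun u => log (Δ a σ u) := by
  have hlr : -a / σ < a / σ := div_lt_div_of_pos_right (by linarith) hσ
  refine ((concaveOn_log_Phi_add_sub_Phi_add hlr).comp_linearMap
    (LinearMap.mulLeft ℝ (-σ⁻¹))).congr fun u _ => ?_
  simp only [Function.comp_apply, LinearMap.mulLeft_apply, Δ]
  congr 3 <;> ring

lemma rpow_sub_one_mul_le_rpow_of_concaveOn_log {f : ℝ → ℝ} (hf : ∀ x, 0 < f x)
    (hlog : ConcaveOn ℝ univ fun x => log (f x)) {α : ℝ} (hα : 1 ≤ α) (x y : ℝ) :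
    f x ^ (α - 1) * f y ≤ f (((α - 1) * x + y) / α) ^ α := by
  have hα0 : 0 < α := by linarith
  have hconc := hlog.2 (mem_univ x) (mem_univ y) (div_nonneg (by linarith) hα0.le)
    (one_div_nonneg.2 hα0.le) (by field_simp; ring : (α - 1) / α + 1 / α = 1)
  simp only [smul_eq_mul] at hconc
  rw [← log_le_log_iff (mul_pos (rpow_pos_of_pos (hf x) _) (hf y)) (rpow_pos_of_pos (hf _) _),
    log_mul (rpow_pos_of_pos (hf x) _).ne' (hf y).ne', log_rpow (hf x), log_rpow (hf _)]
  calc (α - 1) * log (f x) + log (f y)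
      = α * ((α - 1) / α * log (f x) + 1 / α * log (f y)) := by field_simp
    _ ≤ α * log (f ((α - 1) / α * x + 1 / α * y)) := mul_le_mul_of_nonneg_left hconc hα0.le
    _ = α * log (f (((α - 1) * x + y) / α)) := by congr 3; field_simp

/-- The Rényi divergence of order `α` between two truncated Gaussians is at most
that between the corresponding Gaussians: `Δ(θ+c)^{α−1} Δ(θ+(1−α)c) ≤ Δ(θ)^α`. -/
theorem truncated_gaussian_renyi_amplification (α σ a θ c : ℝ)
    (hα : 1 < α) (hσ : 0 < σ) (ha : 0 < a) :
    Δ a σ (θ + c) ^ (α - 1) * Δ a σ (θ + (1 - α) * c) ≤ Δ a σ θ ^ α := by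
  have hθ : ((α - 1) * (θ + c) + (θ + (1 - α) * c)) / α = θ := by
    field_simp
    ring
  simpa only [hθ] using rpow_sub_one_mul_le_rpow_of_concaveOn_log (Δ_pos hσ ha)
    (concaveOn_log_Δ hσ ha) hα.le (θ + c) (θ + (1 - α) * c)
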